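/- Let α, β ∈ [0,1], b ≥ 0, and let z ∈ ℂ satisfy |Im z| ≤ b and Re z ≥ K·e^b + 1, where K = ‖V‖_{L∞(0,1)} + ‖Q‖_{L∞(0,1)}. Define φ₀(x) := cos(zx) and recursively φ_{j+1}(x) := ∫₀ˣ (B(α,β)φ_j)(t)·sin(z(x−t)) dt for x ∈ [0,1]. Then sup_{x∈[0,1]}|φ_j(x)| ≤ e^b·(K·e^b)^j for all j ≥ 0, and the series Σ_{j=0}^{∞} z^{−j}·φ_j(x) converges uniformly on [0,1] to the unique continuous solution φ of the Volterra integral equation φ(x) = cos(zx) + z⁻¹·∫₀ˣ (B(α,β)φ)(t)·sin(z(x−t)) dt. -/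

import Mathlib

open MeasureTheory Set
open scoped ENNReal NNReal

/-- Extension by zero outside `(0,1)`. -/
noncomputable def ext01 (u : ℝ → ℂ) : ℝ → ℂ := Set.indicator (Set.Ioo 0 1) u

/-- The nonlocal term `(B(α,β)u)(x) = V(x)·ũ(x+α) + Q(x)·ũ(x−β)`. -/
noncomputable def Bop (V Q : ℝ → ℂ) (α β : ℝ) (u : ℝ → ℂ) : ℝ → ℂ :=
  fun x => V x * ext01 u (x + α) + Q x * ext01 u (x - β)

/-- `K = ‖V‖_{L∞(0,1)} + ‖Q‖_{L∞(0,1)}`. -/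
noncomputable def Knorm (V Q : ℝ → ℂ) : ℝ :=
  (eLpNorm V ⊤ (volume.restrict (Set.Ioo (0:ℝ) 1))).toReal +
  (eLpNorm Q ⊤ (volume.restrict (Set.Ioo (0:ℝ) 1))).toReal

/-- The iterates `φ₀(x) = cos(zx)`,
`φ_{j+1}(x) = ∫₀ˣ (B(α,β)φ_j)(t)·sin(z(x−t)) dt`. -/
noncomputable def phiIter (V Q : ℝ → ℂ) (α β : ℝ) (z : ℂ) : ℕ → ℝ → ℂ
  | 0 => fun x => Complex.cos (z * ↑x)
  | j + 1 => fun x =>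
      ∫ t in (0:ℝ)..x, Bop V Q α β (phiIter V Q α β z j) t * Complex.sin (z * (↑x - ↑t))

lemma norm_sin_le_exp (w : ℂ) : ‖Complex.sin w‖ ≤ Real.exp |w.im| := by
  rw [Complex.sin]
  have h1 : ‖Complex.exp (-w * Complex.I)‖ = Real.exp w.im := by
    rw [Complex.norm_exp]; simp
  have h2 : ‖Complex.exp (w * Complex.I)‖ = Real.exp (-w.im) := by
    rw [Complex.norm_exp]; simp
  calc ‖(Complex.exp (-w * Complex.I) - Complex.exp (w * Complex.I)) * Complex.I / 2‖
      = ‖Complex.exp (-w * Complex.I) - Complex.exp (w * Complex.I)‖ / 2 := by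
        rw [norm_div, norm_mul]; simp
    _ ≤ (Real.exp w.im + Real.exp (-w.im)) / 2 := by
        rw [← h1, ← h2]; gcongr; exact norm_sub_le _ _
    _ ≤ Real.exp |w.im| := by
        have := le_abs_self w.im
        have := neg_abs_le w.im
        have h3 : Real.exp w.im ≤ Real.exp |w.im| := Real.exp_le_exp.2 (le_abs_self _)
        have h4 : Real.exp (-w.im) ≤ Real.exp |w.im| := Real.exp_le_exp.2 (neg_le_abs _)
        linarith

lemma norm_cos_le_exp (w : ℂ) : ‖Complex.cos w‖ ≤ Real.exp |w.im| := by
  rw [Complex.cos]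
  have h1 : ‖Complex.exp (w * Complex.I)‖ = Real.exp (-w.im) := by
    rw [Complex.norm_exp]; simp
  have h2 : ‖Complex.exp (-w * Complex.I)‖ = Real.exp w.im := by
    rw [Complex.norm_exp]; simp
  calc ‖(Complex.exp (w * Complex.I) + Complex.exp (-w * Complex.I)) / 2‖
      = ‖Complex.exp (w * Complex.I) + Complex.exp (-w * Complex.I)‖ / 2 := by rw [norm_div]; simp
    _ ≤ (Real.exp (-w.im) + Real.exp w.im) / 2 := by rw [← h1, ← h2]; gcongr; exact norm_add_le _ _
    _ ≤ Real.exp |w.im| := by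
        have h3 : Real.exp w.im ≤ Real.exp |w.im| := Real.exp_le_exp.2 (le_abs_self _)
        have h4 : Real.exp (-w.im) ≤ Real.exp |w.im| := Real.exp_le_exp.2 (neg_le_abs _)
        linarith


lemma ext01_norm_le {u : ℝ → ℂ} {C : ℝ} (hC : 0 ≤ C)
    (hu : ∀ x ∈ Icc (0:ℝ) 1, ‖u x‖ ≤ C) (s : ℝ) : ‖ext01 u s‖ ≤ C := by
  unfold ext01
  by_cases h : s ∈ Ioo (0:ℝ) 1
  · rw [indicator_of_mem h]; exact hu s (Ioo_subset_Icc_self h)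
  · rw [indicator_of_notMem h]; simpa using hC

lemma ext01_aesm {u : ℝ → ℂ} (hu : ContinuousOn u (Icc (0:ℝ) 1)) :
    AEStronglyMeasurable (ext01 u) volume := by
  rw [ext01, aestronglyMeasurable_indicator_iff measurableSet_Ioo]
  exact ((hu.mono Ioo_subset_Icc_self).aestronglyMeasurable measurableSet_Ioo)

lemma ext01_sub (u v : ℝ → ℂ) (s : ℝ) :
    ext01 (fun y => u y - v y) s = ext01 u s - ext01 v s := by
  unfold ext01
  by_cases h : s ∈ Ioo (0:ℝ) 1 <;> simp [indicator_apply, h]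

lemma ext01_sum {ι : Type*} (F : Finset ι) (c : ι → ℂ) (u : ι → ℝ → ℂ) (s : ℝ) :
    ext01 (fun y => ∑ j ∈ F, c j * u j y) s = ∑ j ∈ F, c j * ext01 (u j) s := by
  unfold ext01
  by_cases h : s ∈ Ioo (0:ℝ) 1 <;> simp [indicator_apply, h]

lemma Bop_sub (V Q : ℝ → ℂ) (α β : ℝ) (u v : ℝ → ℂ) (t : ℝ) :
    Bop V Q α β (fun y => u y - v y) t = Bop V Q α β u t - Bop V Q α β v t := by
  unfold Bop; rw [ext01_sub, ext01_sub]; ring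

lemma Bop_sum {ι : Type*} (V Q : ℝ → ℂ) (α β : ℝ) (F : Finset ι) (c : ι → ℂ)
    (u : ι → ℝ → ℂ) (t : ℝ) :
    Bop V Q α β (fun y => ∑ j ∈ F, c j * u j y) t
      = ∑ j ∈ F, c j * Bop V Q α β (u j) t := by
  unfold Bop; rw [ext01_sum, ext01_sum, Finset.mul_sum, Finset.mul_sum,
    ← Finset.sum_add_distrib]
  exact Finset.sum_congr rfl fun j _ => by ring

lemma Bop_aesm (V Q : ℝ → ℂ) (hV : Measurable V) (hQ : Measurable Q) (α β : ℝ)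
    {u : ℝ → ℂ} (hu : AEStronglyMeasurable (ext01 u) volume) :
    AEStronglyMeasurable (Bop V Q α β u) volume := by
  have h1 : AEStronglyMeasurable (fun t : ℝ => ext01 u (t + α)) volume :=
    hu.comp_quasiMeasurePreserving (measurePreserving_add_right volume α).quasiMeasurePreserving
  have h2 : AEStronglyMeasurable (fun t : ℝ => ext01 u (t - β)) volume :=
    hu.comp_quasiMeasurePreserving (measurePreserving_sub_right volume β).quasiMeasurePreserving
  exact (hV.aestronglyMeasurable.mul h1).add (hQ.aestronglyMeasurable.mul h2)


lemma Knorm_nonneg (V Q : ℝ → ℂ) : 0 ≤ Knorm V Q :=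
  add_nonneg ENNReal.toReal_nonneg ENNReal.toReal_nonneg

lemma ae_norm_le_of_eLpNorm_top {f : ℝ → ℂ}
    (hf : eLpNorm f ⊤ (volume.restrict (Set.Ioo (0:ℝ) 1)) ≠ ⊤) :
    ∀ᵐ t ∂(volume.restrict (Icc (0:ℝ) 1)),
      ‖f t‖ ≤ (eLpNorm f ⊤ (volume.restrict (Set.Ioo (0:ℝ) 1))).toReal := by
  rw [← Measure.restrict_congr_set Ioo_ae_eq_Icc]
  filter_upwards [enorm_ae_le_eLpNormEssSup f (volume.restrict (Set.Ioo (0:ℝ) 1))] with t ht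
  rw [eLpNorm_exponent_top]
  calc ‖f t‖ = ((‖f t‖₊ : ℝ≥0∞)).toReal := by simp
    _ ≤ _ := ENNReal.toReal_mono (by rwa [eLpNorm_exponent_top] at hf) ht

lemma Bop_ae_bound (V Q : ℝ → ℂ)
    (hVb : eLpNorm V ⊤ (volume.restrict (Set.Ioo (0:ℝ) 1)) ≠ ⊤)
    (hQb : eLpNorm Q ⊤ (volume.restrict (Set.Ioo (0:ℝ) 1)) ≠ ⊤)
    (α β : ℝ) {u : ℝ → ℂ} {C : ℝ} (hC : 0 ≤ C)
    (hu : ∀ x ∈ Icc (0:ℝ) 1, ‖u x‖ ≤ C) :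
    ∀ᵐ t ∂(volume.restrict (Icc (0:ℝ) 1)), ‖Bop V Q α β u t‖ ≤ Knorm V Q * C := by
  filter_upwards [ae_norm_le_of_eLpNorm_top hVb, ae_norm_le_of_eLpNorm_top hQb] with t h1 h2
  have e1 := ext01_norm_le hC hu (t + α)
  have e2 := ext01_norm_le hC hu (t - β)
  calc ‖Bop V Q α β u t‖ ≤ ‖V t * ext01 u (t + α)‖ + ‖Q t * ext01 u (t - β)‖ := norm_add_le _ _
    _ = ‖V t‖ * ‖ext01 u (t + α)‖ + ‖Q t‖ * ‖ext01 u (t - β)‖ := by rw [norm_mul, norm_mul]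
    _ ≤ (eLpNorm V ⊤ (volume.restrict (Set.Ioo (0:ℝ) 1))).toReal * C
        + (eLpNorm Q ⊤ (volume.restrict (Set.Ioo (0:ℝ) 1))).toReal * C :=
        add_le_add (mul_le_mul h1 e1 (norm_nonneg _) ENNReal.toReal_nonneg)
          (mul_le_mul h2 e2 (norm_nonneg _) ENNReal.toReal_nonneg)
    _ = Knorm V Q * C := by rw [Knorm]; ring

lemma intInt_of_aesm_bound {f : ℝ → ℂ} {M : ℝ} (hM : 0 ≤ M)
    (haesm : AEStronglyMeasurable f (volume.restrict (Icc (0:ℝ) 1)))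
    (hbd : ∀ᵐ t ∂(volume.restrict (Icc (0:ℝ) 1)), ‖f t‖ ≤ M)
    (g : ℝ → ℂ) (hg : Continuous g) {x : ℝ} (hx : x ∈ Icc (0:ℝ) 1) :
    IntervalIntegrable (fun t => f t * g t) volume 0 x := by
  obtain ⟨Cg, hCg⟩ := isCompact_Icc.exists_bound_of_continuousOn
    (hg.continuousOn : ContinuousOn g (Icc (0:ℝ) 1))
  have hint : IntegrableOn (fun t => f t * g t) (Icc (0:ℝ) 1) volume := by
    apply Integrable.mono' (integrable_const (M * Cg))
    · exact haesm.mul ((hg.aestronglyMeasurable).restrict)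
    · filter_upwards [hbd, ae_restrict_mem measurableSet_Icc] with t h1 h2
      rw [norm_mul]
      exact mul_le_mul h1 (hCg t h2) (norm_nonneg _) hM
  rw [intervalIntegrable_iff, uIoc_of_le hx.1]
  exact hint.mono_set fun t ht => ⟨ht.1.le, ht.2.trans hx.2⟩

lemma norm_intInt_le {f : ℝ → ℂ} {M : ℝ} (hM : 0 ≤ M)
    (hbd : ∀ᵐ t ∂(volume.restrict (Icc (0:ℝ) 1)), ‖f t‖ ≤ M)
    {g : ℝ → ℂ} {Cg : ℝ} (hCg : ∀ t ∈ Icc (0:ℝ) 1, ‖g t‖ ≤ Cg)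
    {x : ℝ} (hx : x ∈ Icc (0:ℝ) 1) :
    ‖∫ t in (0:ℝ)..x, f t * g t‖ ≤ M * Cg := by
  have hb' : ∀ᵐ t ∂volume, t ∈ Icc (0:ℝ) 1 → ‖f t‖ ≤ M :=
    (ae_restrict_iff' measurableSet_Icc).1 hbd
  have key : ∀ᵐ t ∂volume, t ∈ uIoc (0:ℝ) x → ‖f t * g t‖ ≤ M * Cg := by
    filter_upwards [hb'] with t h1 ht
    have htI : t ∈ Icc (0:ℝ) 1 := by
      rw [uIoc_of_le hx.1] at ht; exact ⟨ht.1.le, ht.2.trans hx.2⟩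
    rw [norm_mul]
    exact mul_le_mul (h1 htI) (hCg t htI) (norm_nonneg _) hM
  calc ‖∫ t in (0:ℝ)..x, f t * g t‖ ≤ M * Cg * |x - 0| :=
        intervalIntegral.norm_integral_le_of_norm_le_const_ae key
    _ ≤ M * Cg * 1 := by
        apply mul_le_mul_of_nonneg_left _ (mul_nonneg hM ((norm_nonneg (g 0)).trans (hCg 0 (by norm_num))))
        rw [sub_zero, abs_of_nonneg hx.1]; exact hx.2
    _ = M * Cg := mul_one _

lemma intervalIntegrable_of_integrableOn01 {f : ℝ → ℂ}
    (h : IntegrableOn f (Icc (0:ℝ) 1) volume) {x : ℝ} (hx : x ∈ Icc (0:ℝ) 1) :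
    IntervalIntegrable f volume 0 x := by
  rw [intervalIntegrable_iff, uIoc_of_le hx.1]
  exact h.mono_set fun t ht => ⟨ht.1.le, ht.2.trans hx.2⟩

lemma integrableOn_of_aesm_bound {f : ℝ → ℂ} {M : ℝ} (hM : 0 ≤ M)
    (haesm : AEStronglyMeasurable f (volume.restrict (Icc (0:ℝ) 1)))
    (hbd : ∀ᵐ t ∂(volume.restrict (Icc (0:ℝ) 1)), ‖f t‖ ≤ M)
    (g : ℝ → ℂ) (hg : Continuous g) :
    IntegrableOn (fun t => f t * g t) (Icc (0:ℝ) 1) volume := by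
  obtain ⟨Cg, hCg⟩ := isCompact_Icc.exists_bound_of_continuousOn
    (hg.continuousOn : ContinuousOn g (Icc (0:ℝ) 1))
  apply Integrable.mono' (integrable_const (M * Cg))
  · exact haesm.mul ((hg.aestronglyMeasurable).restrict)
  · filter_upwards [hbd, ae_restrict_mem measurableSet_Icc] with t h1 h2
    rw [norm_mul]
    exact mul_le_mul h1 (hCg t h2) (norm_nonneg _) hM


noncomputable def Spart (V Q : ℝ → ℂ) (α β : ℝ) (z : ℂ) (N : ℕ) : ℝ → ℂ :=
  fun x => ∑ j ∈ Finset.range N, (z ^ j)⁻¹ * phiIter V Q α β z j x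


/-- Bounds on the iterates and uniform convergence of the Neumann series
`Σ_j z^{−j} φ_j` to the unique continuous solution of the Volterra equation. -/
theorem stmt_7 (V Q : ℝ → ℂ) (hVmeas : Measurable V) (hQmeas : Measurable Q)
    (hVb : eLpNorm V ⊤ (volume.restrict (Set.Ioo (0:ℝ) 1)) ≠ ⊤)
    (hQb : eLpNorm Q ⊤ (volume.restrict (Set.Ioo (0:ℝ) 1)) ≠ ⊤)
    (α β : ℝ) (hα : α ∈ Set.Icc (0:ℝ) 1) (hβ : β ∈ Set.Icc (0:ℝ) 1)
    (b : ℝ) (hb : 0 ≤ b) (z : ℂ) (hzim : |z.im| ≤ b)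
    (hzre : Knorm V Q * Real.exp b + 1 ≤ z.re) :
    (∀ j : ℕ, ∀ x ∈ Set.Icc (0:ℝ) 1,
        ‖phiIter V Q α β z j x‖ ≤ Real.exp b * (Knorm V Q * Real.exp b) ^ j) ∧
    (∃ φ : ℝ → ℂ, ContinuousOn φ (Set.Icc (0:ℝ) 1) ∧
      (∀ x ∈ Set.Icc (0:ℝ) 1,
        φ x = Complex.cos (z * ↑x)
          + z⁻¹ * ∫ t in (0:ℝ)..x, Bop V Q α β φ t * Complex.sin (z * (↑x - ↑t)))) ∧
    (∀ φ : ℝ → ℂ, ContinuousOn φ (Set.Icc (0:ℝ) 1) →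
      (∀ x ∈ Set.Icc (0:ℝ) 1,
        φ x = Complex.cos (z * ↑x)
          + z⁻¹ * ∫ t in (0:ℝ)..x, Bop V Q α β φ t * Complex.sin (z * (↑x - ↑t))) →
      TendstoUniformlyOn
        (fun N x => ∑ j ∈ Finset.range N, (z ^ j)⁻¹ * phiIter V Q α β z j x)
        φ Filter.atTop (Set.Icc (0:ℝ) 1)) := by
  set K := Knorm V Q with hKdef
  set E := Real.exp b with hEdef
  set r := K * E with hrdef
  have hK0 : 0 ≤ K := Knorm_nonneg V Q
  have hE0 : (0:ℝ) < E := Real.exp_pos b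
  have hE1 : (1:ℝ) ≤ E := Real.one_le_exp hb
  have hr0 : 0 ≤ r := mul_nonneg hK0 hE0.le
  have hz : r + 1 ≤ ‖z‖ := by
    calc r + 1 ≤ z.re := hzre
      _ ≤ |z.re| := le_abs_self _
      _ ≤ ‖z‖ := Complex.abs_re_le_norm z
      _ = ‖z‖ := rfl
  have hzne : z ≠ 0 := by
    intro h
    rw [h, norm_zero] at hz; linarith
  set q := r / (r + 1) with hqdef
  have hq0 : 0 ≤ q := div_nonneg hr0 (by linarith)
  have hq1 : q < 1 := (div_lt_one (by linarith)).2 (by linarith)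
  -- sin bound
  have hsin : ∀ x ∈ Icc (0:ℝ) 1, ∀ t ∈ Icc (0:ℝ) 1,
      ‖Complex.sin (z * (↑x - ↑t))‖ ≤ E := by
    intro x hx t ht
    refine (norm_sin_le_exp _).trans ?_
    apply Real.exp_le_exp.2
    have him : (z * ((x:ℂ) - (t:ℂ))).im = z.im * (x - t) := by
      simp [Complex.mul_im]
    rw [him, abs_mul]
    have hxt : |x - t| ≤ 1 := by
      rw [abs_le]; constructor <;> [linarith [hx.1, hx.2, ht.1, ht.2]; linarith [hx.1, hx.2, ht.1, ht.2]]
    calc |z.im| * |x - t| ≤ b * 1 := mul_le_mul hzim hxt (abs_nonneg _) hb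
      _ = b := mul_one b
  -- main induction
  have main : ∀ j : ℕ, ContinuousOn (phiIter V Q α β z j) (Icc (0:ℝ) 1) ∧
      ∀ x ∈ Icc (0:ℝ) 1, ‖phiIter V Q α β z j x‖ ≤ E * r ^ j := by
    intro j
    induction j with
    | zero =>
      constructor
      · exact (Complex.continuous_cos.comp (continuous_const.mul Complex.continuous_ofReal)).continuousOn
      · intro x hx
        simp only [phiIter, pow_zero, mul_one]
        refine (norm_cos_le_exp _).trans (Real.exp_le_exp.2 ?_)
        have him : (z * (x:ℂ)).im = z.im * x := by simp [Complex.mul_im]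
        rw [him, abs_mul]
        calc |z.im| * |x| ≤ b * 1 := by
              apply mul_le_mul hzim _ (abs_nonneg _) hb
              rw [abs_of_nonneg hx.1]; exact hx.2
          _ = b := mul_one b
    | succ j ih =>
      obtain ⟨hcont, hbd⟩ := ih
      set C := E * r ^ j with hCdef
      have hC0 : 0 ≤ C := mul_nonneg hE0.le (pow_nonneg hr0 _)
      set f := Bop V Q α β (phiIter V Q α β z j) with hfdef
      have haesm : AEStronglyMeasurable f (volume.restrict (Icc (0:ℝ) 1)) :=
        (Bop_aesm V Q hVmeas hQmeas α β (ext01_aesm hcont)).restrict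
      have hbB : ∀ᵐ t ∂(volume.restrict (Icc (0:ℝ) 1)), ‖f t‖ ≤ K * C :=
        Bop_ae_bound V Q hVb hQb α β hC0 hbd
      have hKC0 : 0 ≤ K * C := mul_nonneg hK0 hC0
      constructor
      · -- continuity via expansion
        have h1 : IntegrableOn (fun t => f t * Complex.cos (z * ↑t)) (Icc (0:ℝ) 1) volume :=
          integrableOn_of_aesm_bound hKC0 haesm hbB _
            (Complex.continuous_cos.comp (continuous_const.mul Complex.continuous_ofReal))
        have h2 : IntegrableOn (fun t => f t * Complex.sin (z * ↑t)) (Icc (0:ℝ) 1) volume :=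
          integrableOn_of_aesm_bound hKC0 haesm hbB _
            (Complex.continuous_sin.comp (continuous_const.mul Complex.continuous_ofReal))
        have huIcc : uIcc (0:ℝ) 1 = Icc (0:ℝ) 1 := uIcc_of_le (by norm_num)
        have hA : ContinuousOn (fun x => ∫ t in (0:ℝ)..x, f t * Complex.cos (z * ↑t)) (Icc (0:ℝ) 1) := by
          rw [← huIcc]
          exact intervalIntegral.continuousOn_primitive_interval (by rwa [huIcc])
        have hB : ContinuousOn (fun x => ∫ t in (0:ℝ)..x, f t * Complex.sin (z * ↑t)) (Icc (0:ℝ) 1) := by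
          rw [← huIcc]
          exact intervalIntegral.continuousOn_primitive_interval (by rwa [huIcc])
        have hexp : ∀ x ∈ Icc (0:ℝ) 1, phiIter V Q α β z (j+1) x
            = Complex.sin (z * ↑x) * (∫ t in (0:ℝ)..x, f t * Complex.cos (z * ↑t))
              - Complex.cos (z * ↑x) * (∫ t in (0:ℝ)..x, f t * Complex.sin (z * ↑t)) := by
          intro x hx
          have e1 : IntervalIntegrable (fun t => f t * Complex.cos (z * ↑t)) volume 0 x :=
            intervalIntegrable_of_integrableOn01 h1 hx
          have e2 : IntervalIntegrable (fun t => f t * Complex.sin (z * ↑t)) volume 0 x :=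
            intervalIntegrable_of_integrableOn01 h2 hx
          simp only [phiIter]
          calc (∫ t in (0:ℝ)..x, f t * Complex.sin (z * (↑x - ↑t)))
              = ∫ t in (0:ℝ)..x, (Complex.sin (z * ↑x) * (f t * Complex.cos (z * ↑t))
                  - Complex.cos (z * ↑x) * (f t * Complex.sin (z * ↑t))) := by
                apply intervalIntegral.integral_congr
                intro t _
                show f t * Complex.sin (z * (↑x - ↑t))
                  = Complex.sin (z * ↑x) * (f t * Complex.cos (z * ↑t))
                    - Complex.cos (z * ↑x) * (f t * Complex.sin (z * ↑t))
                have h' : z * (↑x - ↑t) = z * ↑x - z * ↑t := by ring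
                rw [h', Complex.sin_sub]; ring
            _ = Complex.sin (z * ↑x) * (∫ t in (0:ℝ)..x, f t * Complex.cos (z * ↑t))
                  - Complex.cos (z * ↑x) * (∫ t in (0:ℝ)..x, f t * Complex.sin (z * ↑t)) := by
                rw [intervalIntegral.integral_sub (e1.const_mul _) (e2.const_mul _),
                  intervalIntegral.integral_const_mul, intervalIntegral.integral_const_mul]
        apply ContinuousOn.congr _ fun x hx => hexp x hx
        exact (((Complex.continuous_sin.comp (continuous_const.mul Complex.continuous_ofReal)).continuousOn).mul hA).sub
          (((Complex.continuous_cos.comp (continuous_const.mul Complex.continuous_ofReal)).continuousOn).mul hB)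
      · intro x hx
        simp only [phiIter]
        have := norm_intInt_le hKC0 hbB (fun t ht => hsin x hx t ht) hx
        calc ‖∫ t in (0:ℝ)..x, f t * Complex.sin (z * (↑x - ↑t))‖ ≤ K * C * E := this
          _ = E * r ^ (j+1) := by rw [hCdef, hrdef]; ring
  -- generic integral facts
  have hsinc : ∀ x : ℝ, Continuous fun t : ℝ => Complex.sin (z * (↑x - ↑t)) := fun x =>
    Complex.continuous_sin.comp (continuous_const.mul (continuous_const.sub Complex.continuous_ofReal))
  have hIntSin : ∀ (u : ℝ → ℂ) (C : ℝ), 0 ≤ C → AEStronglyMeasurable (ext01 u) volume →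
      (∀ y ∈ Icc (0:ℝ) 1, ‖u y‖ ≤ C) → ∀ x ∈ Icc (0:ℝ) 1,
      IntervalIntegrable (fun t => Bop V Q α β u t * Complex.sin (z * (↑x - ↑t))) volume 0 x := by
    intro u C hC hu hubd x hx
    exact intervalIntegrable_of_integrableOn01
      (integrableOn_of_aesm_bound (mul_nonneg hK0 hC)
        ((Bop_aesm V Q hVmeas hQmeas α β hu).restrict)
        (Bop_ae_bound V Q hVb hQb α β hC hubd) _ (hsinc x)) hx
  have hNormInt : ∀ (u : ℝ → ℂ) (C : ℝ), 0 ≤ C → (∀ y ∈ Icc (0:ℝ) 1, ‖u y‖ ≤ C) →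
      ∀ x ∈ Icc (0:ℝ) 1,
      ‖∫ t in (0:ℝ)..x, Bop V Q α β u t * Complex.sin (z * (↑x - ↑t))‖ ≤ K * C * E := by
    intro u C hC hubd x hx
    exact norm_intInt_le (mul_nonneg hK0 hC) (Bop_ae_bound V Q hVb hQb α β hC hubd)
      (fun t ht => hsin x hx t ht) hx
  have hkey : ∀ (u v : ℝ → ℂ) (Cu Cv c : ℝ), 0 ≤ Cu → 0 ≤ Cv → 0 ≤ c →
      AEStronglyMeasurable (ext01 u) volume → AEStronglyMeasurable (ext01 v) volume →
      (∀ y ∈ Icc (0:ℝ) 1, ‖u y‖ ≤ Cu) → (∀ y ∈ Icc (0:ℝ) 1, ‖v y‖ ≤ Cv) →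
      (∀ y ∈ Icc (0:ℝ) 1, ‖u y - v y‖ ≤ c) → ∀ x ∈ Icc (0:ℝ) 1,
      ‖(∫ t in (0:ℝ)..x, Bop V Q α β u t * Complex.sin (z * (↑x - ↑t)))
        - ∫ t in (0:ℝ)..x, Bop V Q α β v t * Complex.sin (z * (↑x - ↑t))‖ ≤ K * c * E := by
    intro u v Cu Cv c hCu hCv hc hau hav hub hvb hdiff x hx
    rw [← intervalIntegral.integral_sub (hIntSin u Cu hCu hau hub x hx)
      (hIntSin v Cv hCv hav hvb x hx)]
    have hcong : (∫ t in (0:ℝ)..x, (Bop V Q α β u t * Complex.sin (z * (↑x - ↑t))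
          - Bop V Q α β v t * Complex.sin (z * (↑x - ↑t))))
        = ∫ t in (0:ℝ)..x, Bop V Q α β (fun y => u y - v y) t * Complex.sin (z * (↑x - ↑t)) := by
      apply intervalIntegral.integral_congr
      intro t _
      show Bop V Q α β u t * Complex.sin (z * (↑x - ↑t))
          - Bop V Q α β v t * Complex.sin (z * (↑x - ↑t))
        = Bop V Q α β (fun y => u y - v y) t * Complex.sin (z * (↑x - ↑t))
      rw [Bop_sub]; ring
    rw [hcong]
    exact hNormInt _ c hc hdiff x hx
  have hqc : ∀ (c : ℝ), 0 ≤ c → ∀ A B : ℂ, ‖A - B‖ ≤ K * c * E →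
      ‖z⁻¹ * A - z⁻¹ * B‖ ≤ q * c := by
    intro c hc A B h
    rw [← mul_sub, norm_mul, norm_inv]
    calc ‖z‖⁻¹ * ‖A - B‖ ≤ (r + 1)⁻¹ * (K * c * E) :=
          mul_le_mul (inv_anti₀ (by linarith) hz) h (norm_nonneg _)
            (inv_nonneg.2 (by linarith))
      _ = q * c := by
          have hr1 : r + 1 ≠ 0 := ne_of_gt (by linarith)
          have hKE : K * c * E = r * c := by rw [hrdef]; ring
          rw [hKE, hqdef]
          field_simp
  have hterm : ∀ (j : ℕ), ∀ x ∈ Icc (0:ℝ) 1,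
      ‖(z ^ j)⁻¹ * phiIter V Q α β z j x‖ ≤ E * q ^ j := by
    intro j x hx
    rw [norm_mul, norm_inv, norm_pow]
    have h2 : (‖z‖ ^ j)⁻¹ ≤ ((r + 1) ^ j)⁻¹ :=
      inv_anti₀ (pow_pos (by linarith) j) (pow_le_pow_left₀ (by linarith) hz j)
    calc (‖z‖ ^ j)⁻¹ * ‖phiIter V Q α β z j x‖ ≤ ((r + 1) ^ j)⁻¹ * (E * r ^ j) :=
          mul_le_mul h2 ((main j).2 x hx) (norm_nonneg _)
            (inv_nonneg.2 (pow_nonneg (by linarith) j))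
      _ = E * q ^ j := by
          have hr1 : (r + 1) ≠ 0 := ne_of_gt (by linarith)
          rw [hqdef, div_pow]
          field_simp
  have hScont : ∀ N, ContinuousOn (Spart V Q α β z N) (Icc (0:ℝ) 1) := by
    intro N
    show ContinuousOn (fun x => ∑ j ∈ Finset.range N, (z ^ j)⁻¹ * phiIter V Q α β z j x) (Icc (0:ℝ) 1)
    exact continuousOn_finset_sum _ fun j _ => continuousOn_const.mul (main j).1
  have hgs : Summable (fun j : ℕ => E * q ^ j) :=
    (summable_geometric_of_lt_one hq0 hq1).mul_left E
  have hSbd : ∀ N, ∀ x ∈ Icc (0:ℝ) 1, ‖Spart V Q α β z N x‖ ≤ E * (1 - q)⁻¹ := by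
    intro N x hx
    calc ‖Spart V Q α β z N x‖
        ≤ ∑ j ∈ Finset.range N, ‖(z ^ j)⁻¹ * phiIter V Q α β z j x‖ := norm_sum_le _ _
      _ ≤ ∑ j ∈ Finset.range N, E * q ^ j := Finset.sum_le_sum fun j _ => hterm j x hx
      _ ≤ ∑' j, E * q ^ j := Summable.sum_le_tsum _ (fun j _ => mul_nonneg hE0.le (pow_nonneg hq0 j)) hgs
      _ = E * (1 - q)⁻¹ := by rw [tsum_mul_left, tsum_geometric_of_lt_one hq0 hq1]
  have hSrec : ∀ (N : ℕ), ∀ x ∈ Icc (0:ℝ) 1,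
      Spart V Q α β z (N + 1) x = Complex.cos (z * ↑x)
        + z⁻¹ * ∫ t in (0:ℝ)..x, Bop V Q α β (Spart V Q α β z N) t
            * Complex.sin (z * (↑x - ↑t)) := by
    intro N x hx
    have hIj : ∀ j : ℕ, IntervalIntegrable
        (fun t => Bop V Q α β (phiIter V Q α β z j) t * Complex.sin (z * (↑x - ↑t))) volume 0 x :=
      fun j => hIntSin _ _ (mul_nonneg hE0.le (pow_nonneg hr0 j)) (ext01_aesm (main j).1)
        ((main j).2) x hx
    have e1 : (∫ t in (0:ℝ)..x, Bop V Q α β (Spart V Q α β z N) t * Complex.sin (z * (↑x - ↑t)))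
        = ∑ j ∈ Finset.range N, (z ^ j)⁻¹
            * ∫ t in (0:ℝ)..x, Bop V Q α β (phiIter V Q α β z j) t
                * Complex.sin (z * (↑x - ↑t)) := by
      calc (∫ t in (0:ℝ)..x, Bop V Q α β (Spart V Q α β z N) t * Complex.sin (z * (↑x - ↑t)))
          = ∫ t in (0:ℝ)..x, ∑ j ∈ Finset.range N, (z ^ j)⁻¹
              * (Bop V Q α β (phiIter V Q α β z j) t * Complex.sin (z * (↑x - ↑t))) := by
            apply intervalIntegral.integral_congr
            intro t _
            show Bop V Q α β (Spart V Q α β z N) t * Complex.sin (z * (↑x - ↑t)) = _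
            rw [show Spart V Q α β z N
                = fun y => ∑ j ∈ Finset.range N, (z ^ j)⁻¹ * phiIter V Q α β z j y from rfl,
              Bop_sum V Q α β (Finset.range N) (fun j => (z ^ j)⁻¹)
                (fun j => phiIter V Q α β z j) t, Finset.sum_mul]
            exact Finset.sum_congr rfl fun j _ => by ring
        _ = ∑ j ∈ Finset.range N, ∫ t in (0:ℝ)..x, (z ^ j)⁻¹
              * (Bop V Q α β (phiIter V Q α β z j) t * Complex.sin (z * (↑x - ↑t))) :=
            intervalIntegral.integral_finset_sum (fun j _ => (hIj j).const_mul _)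
        _ = ∑ j ∈ Finset.range N, (z ^ j)⁻¹
              * ∫ t in (0:ℝ)..x, Bop V Q α β (phiIter V Q α β z j) t
                  * Complex.sin (z * (↑x - ↑t)) := by
            simp [intervalIntegral.integral_const_mul]
    rw [e1]
    show ∑ j ∈ Finset.range (N + 1), (z ^ j)⁻¹ * phiIter V Q α β z j x = _
    rw [Finset.sum_range_succ']
    simp only [pow_zero, inv_one, one_mul]
    rw [show phiIter V Q α β z 0 x = Complex.cos (z * ↑x) from rfl, add_comm]
    congr 1
    rw [Finset.mul_sum]
    apply Finset.sum_congr rfl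
    intro j _
    rw [show phiIter V Q α β z (j + 1) x
        = ∫ t in (0:ℝ)..x, Bop V Q α β (phiIter V Q α β z j) t * Complex.sin (z * (↑x - ↑t))
        from rfl, pow_succ, mul_inv]
    ring
  -- limit function
  set philim : ℝ → ℂ := fun x => ∑' j, (z ^ j)⁻¹ * phiIter V Q α β z j x with hphilim
  have htuo : TendstoUniformlyOn
      (fun N x => ∑ j ∈ Finset.range N, (z ^ j)⁻¹ * phiIter V Q α β z j x)
      philim Filter.atTop (Icc (0:ℝ) 1) :=
    tendstoUniformlyOn_tsum_nat hgs fun j x hx => hterm j x hx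
  have hphicont : ContinuousOn philim (Icc (0:ℝ) 1) :=
    htuo.continuousOn (Filter.Eventually.of_forall fun N => hScont N).frequently
  have hsf : ∀ x ∈ Icc (0:ℝ) 1, Summable fun j => (z ^ j)⁻¹ * phiIter V Q α β z j x := by
    intro x hx
    exact Summable.of_norm_bounded hgs fun j => hterm j x hx
  have hCl0 : (0:ℝ) ≤ E * (1 - q)⁻¹ :=
    mul_nonneg hE0.le (inv_nonneg.2 (by linarith))
  have htail : ∀ N, ∀ x ∈ Icc (0:ℝ) 1,
      ‖philim x - Spart V Q α β z N x‖ ≤ E * (1 - q)⁻¹ * q ^ N := by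
    intro N x hx
    have h0 := Summable.sum_add_tsum_nat_add (f := fun j => (z ^ j)⁻¹ * phiIter V Q α β z j x) N (hsf x hx)
    have hdiff : philim x - Spart V Q α β z N x
        = ∑' i, (z ^ (i + N))⁻¹ * phiIter V Q α β z (i + N) x := by
      rw [hphilim]
      show (∑' j, (z ^ j)⁻¹ * phiIter V Q α β z j x)
        - ∑ j ∈ Finset.range N, (z ^ j)⁻¹ * phiIter V Q α β z j x = _
      rw [← h0]; ring
    rw [hdiff]
    have hsub : Summable fun i : ℕ => E * q ^ (i + N) :=
      (((summable_geometric_of_lt_one hq0 hq1).mul_left (E * q ^ N)).congr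
        (fun i => by rw [pow_add]; ring))
    have hnorms : Summable fun i : ℕ => ‖(z ^ (i + N))⁻¹ * phiIter V Q α β z (i + N) x‖ :=
      Summable.of_nonneg_of_le (fun i => norm_nonneg _) (fun i => hterm (i + N) x hx) hsub
    calc ‖∑' i, (z ^ (i + N))⁻¹ * phiIter V Q α β z (i + N) x‖
        ≤ ∑' i, ‖(z ^ (i + N))⁻¹ * phiIter V Q α β z (i + N) x‖ := norm_tsum_le_tsum_norm hnorms
      _ ≤ ∑' i, E * q ^ (i + N) := Summable.tsum_le_tsum (fun i => hterm (i + N) x hx) hnorms hsub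
      _ = ∑' i, E * q ^ N * q ^ i := tsum_congr fun i => by rw [pow_add]; ring
      _ = E * q ^ N * (1 - q)⁻¹ := by rw [tsum_mul_left, tsum_geometric_of_lt_one hq0 hq1]
      _ = E * (1 - q)⁻¹ * q ^ N := by ring
  have hphibd : ∀ x ∈ Icc (0:ℝ) 1, ‖philim x‖ ≤ E * (1 - q)⁻¹ := by
    intro x hx
    have := htail 0 x hx
    simp only [Spart, Finset.range_zero, Finset.sum_empty, sub_zero, pow_zero, mul_one] at this
    exact this
  -- philim solves the equation
  have hphisol : ∀ x ∈ Icc (0:ℝ) 1, philim x = Complex.cos (z * ↑x)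
      + z⁻¹ * ∫ t in (0:ℝ)..x, Bop V Q α β philim t * Complex.sin (z * (↑x - ↑t)) := by
    intro x hx
    have hDbound : ∀ N : ℕ,
        ‖philim x - (Complex.cos (z * ↑x)
          + z⁻¹ * ∫ t in (0:ℝ)..x, Bop V Q α β philim t * Complex.sin (z * (↑x - ↑t)))‖
        ≤ 2 * (E * (1 - q)⁻¹) * q ^ N := by
      intro N
      have h1 := htail (N + 1) x hx
      have h2 := hSrec N x hx
      have hdiffN : ∀ y ∈ Icc (0:ℝ) 1,
          ‖Spart V Q α β z N y - philim y‖ ≤ E * (1 - q)⁻¹ * q ^ N := fun y hy => by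
        rw [norm_sub_rev]; exact htail N y hy
      have h3 : ‖z⁻¹ * (∫ t in (0:ℝ)..x, Bop V Q α β (Spart V Q α β z N) t
              * Complex.sin (z * (↑x - ↑t)))
            - z⁻¹ * ∫ t in (0:ℝ)..x, Bop V Q α β philim t * Complex.sin (z * (↑x - ↑t))‖
          ≤ q * (E * (1 - q)⁻¹ * q ^ N) :=
        hqc _ (mul_nonneg hCl0 (pow_nonneg hq0 N)) _ _
          (hkey (Spart V Q α β z N) philim _ _ _ hCl0 hCl0
            (mul_nonneg hCl0 (pow_nonneg hq0 N)) (ext01_aesm (hScont N)) (ext01_aesm hphicont)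
            (hSbd N) hphibd hdiffN x hx)
      have e : philim x - (Complex.cos (z * ↑x)
            + z⁻¹ * ∫ t in (0:ℝ)..x, Bop V Q α β philim t * Complex.sin (z * (↑x - ↑t)))
          = (philim x - Spart V Q α β z (N + 1) x)
            + (z⁻¹ * (∫ t in (0:ℝ)..x, Bop V Q α β (Spart V Q α β z N) t
                * Complex.sin (z * (↑x - ↑t)))
              - z⁻¹ * ∫ t in (0:ℝ)..x, Bop V Q α β philim t * Complex.sin (z * (↑x - ↑t))) := by
        rw [h2]; ring
      rw [e]
      calc ‖_ + _‖ ≤ ‖philim x - Spart V Q α β z (N + 1) x‖ + _ := norm_add_le _ _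
        _ ≤ E * (1 - q)⁻¹ * q ^ (N + 1) + q * (E * (1 - q)⁻¹ * q ^ N) := add_le_add h1 h3
        _ ≤ E * (1 - q)⁻¹ * q ^ N + E * (1 - q)⁻¹ * q ^ N := by
            apply add_le_add
            · apply mul_le_mul_of_nonneg_left _ hCl0
              exact pow_le_pow_of_le_one hq0 hq1.le (by omega)
            · calc q * (E * (1 - q)⁻¹ * q ^ N) ≤ 1 * (E * (1 - q)⁻¹ * q ^ N) :=
                  mul_le_mul_of_nonneg_right hq1.le (mul_nonneg hCl0 (pow_nonneg hq0 N))
                _ = E * (1 - q)⁻¹ * q ^ N := one_mul _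
        _ = 2 * (E * (1 - q)⁻¹) * q ^ N := by ring
    have hlim : Filter.Tendsto (fun N : ℕ => 2 * (E * (1 - q)⁻¹) * q ^ N)
        Filter.atTop (nhds 0) := by
      simpa using (tendsto_pow_atTop_nhds_zero_of_lt_one hq0 hq1).const_mul (2 * (E * (1 - q)⁻¹))
    have hle0 : ‖philim x - (Complex.cos (z * ↑x)
        + z⁻¹ * ∫ t in (0:ℝ)..x, Bop V Q α β philim t * Complex.sin (z * (↑x - ↑t)))‖ ≤ 0 :=
      ge_of_tendsto' hlim hDbound
    have := norm_le_zero_iff.1 hle0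
    exact sub_eq_zero.1 this
  refine ⟨fun j => (main j).2, ⟨philim, hphicont, hphisol⟩, ?_⟩
  -- part 3: any continuous solution is the uniform limit
  intro φ hφc hφsol
  obtain ⟨Cφ, hCφ⟩ := isCompact_Icc.exists_bound_of_continuousOn hφc
  have hCφ0 : 0 ≤ Cφ := (norm_nonneg (φ 0)).trans (hCφ 0 (by norm_num))
  have hiter : ∀ N : ℕ, ∀ x ∈ Icc (0:ℝ) 1,
      ‖Spart V Q α β z N x - φ x‖ ≤ Cφ * q ^ N := by
    intro N
    induction N with
    | zero =>
      intro x hx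
      show ‖(∑ j ∈ Finset.range 0, (z ^ j)⁻¹ * phiIter V Q α β z j x) - φ x‖ ≤ Cφ * q ^ 0
      simp only [Finset.range_zero, Finset.sum_empty, pow_zero, mul_one, zero_sub, norm_neg]
      exact hCφ x hx
    | succ N ih =>
      intro x hx
      have h2 := hSrec N x hx
      have h3 := hφsol x hx
      have e : Spart V Q α β z (N + 1) x - φ x
          = z⁻¹ * (∫ t in (0:ℝ)..x, Bop V Q α β (Spart V Q α β z N) t
              * Complex.sin (z * (↑x - ↑t)))
            - z⁻¹ * ∫ t in (0:ℝ)..x, Bop V Q α β φ t * Complex.sin (z * (↑x - ↑t)) := by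
        rw [h2, h3]; ring
      rw [e]
      calc ‖_ - _‖ ≤ q * (Cφ * q ^ N) :=
            hqc _ (mul_nonneg hCφ0 (pow_nonneg hq0 N)) _ _
              (hkey (Spart V Q α β z N) φ _ _ _ hCl0 hCφ0
                (mul_nonneg hCφ0 (pow_nonneg hq0 N)) (ext01_aesm (hScont N)) (ext01_aesm hφc)
                (hSbd N) hCφ ih x hx)
        _ = Cφ * q ^ (N + 1) := by ring
  rw [Metric.tendstoUniformlyOn_iff]
  intro ε hε
  have hlim : Filter.Tendsto (fun N : ℕ => Cφ * q ^ N) Filter.atTop (nhds 0) := by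
    simpa using (tendsto_pow_atTop_nhds_zero_of_lt_one hq0 hq1).const_mul Cφ
  filter_upwards [hlim.eventually_lt_const hε] with N hN x hx
  have : dist (φ x) (∑ j ∈ Finset.range N, (z ^ j)⁻¹ * phiIter V Q α β z j x)
      = ‖Spart V Q α β z N x - φ x‖ := by
    rw [dist_eq_norm, norm_sub_rev]
    rfl
  rw [this]
  exact lt_of_le_of_lt (hiter N x hx) hN
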